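/- Assume Conjecture 1 holds: for every compact Hausdorff system (f,X,Ω), every étale cover (f',X',Ω') of (f,X,Ω), and every compactification (f_Z,Z,Ω_Z) of (f',X',Ω'), one has h_top(f) ≤ h_top(f_Z). Then whenever (f',X',Ω') is an étale cover of (f,X,Ω), we have h_Ω(f) ≤ h_{Ω'}(f'). -/

import Mathlib

open Set Topology

/-- Topological entropy of a continuous self-map of a compact Hausdorff space, computed
with respect to the unique uniform structure compatible with the topology. -/
noncomputable def htop {Z : Type*} [TopologicalSpace Z] [CompactSpace Z] [T2Space Z]
    (g : Z → Z) : EReal :=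
  @Dynamics.coverEntropy Z uniformSpaceOfCompactR1 g Set.univ

/-- `h_CR(f,Ω)`: the supremum of the topological entropies of the restrictions of `f` to
compact (Hausdorff) invariant subsets, or `0` if there is no such nonempty subset. -/
noncomputable def hCR {X : Type*} [TopologicalSpace X] (f : X → X) : EReal :=
  sSup ({0} ∪ {h : EReal | ∃ (K : Set X) (hK : IsCompact K) (t2K : T2Space K)
    (hf : Set.MapsTo f K K),
    h = @htop K _ (isCompact_iff_compactSpace.mp hK) t2K (hf.restrict f K K)})

/-- `(f', X', Ω')` is an étale cover of `(f, X, Ω)` via `π`: `π` is a continuous surjection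
with finite fibers satisfying `π ∘ f' = f ∘ π` (and `f'` is continuous). -/
def IsEtaleCover {X X' : Type*} [TopologicalSpace X] [TopologicalSpace X']
    (f : X → X) (f' : X' → X') (π : X' → X) : Prop :=
  Continuous f' ∧ Continuous π ∧ Function.Surjective π ∧ (∀ x : X, (π ⁻¹' {x}).Finite) ∧
    π ∘ f' = f ∘ π

/-- `(f_Z, Z, Ω_Z)` is a compactification of `(f', X', Ω')` via the embedding `e`:
`Z` is compact Hausdorff (recorded by the instance arguments), `e` is a dense embedding
and `f_Z` is a continuous extension of `f'` along `e`. -/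
def IsCompactification {X' Z : Type*} [TopologicalSpace X'] [TopologicalSpace Z]
    [CompactSpace Z] [T2Space Z] (f' : X' → X') (fZ : Z → Z) (e : X' → Z) : Prop :=
  Continuous fZ ∧ IsEmbedding e ∧ DenseRange e ∧ fZ ∘ e = e ∘ f'

/-- The set of entropies of all compactifications of all étale covers of `(f, X, Ω)`,
i.e. of all members of the class `𝒜(Ω,f)`. -/
def etaleCompEntropies {X : Type u} [TopologicalSpace X] (f : X → X) : Set EReal :=
  {h : EReal | ∃ (X' : Type u) (tX' : TopologicalSpace X') (f' : X' → X') (π : X' → X),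
    IsEtaleCover f f' π ∧
    ∃ (Z : Type u) (tZ : TopologicalSpace Z) (cZ : CompactSpace Z) (t2Z : T2Space Z)
      (fZ : Z → Z) (e : X' → Z),
      @IsCompactification X' Z tX' tZ cZ t2Z f' fZ e ∧ h = @htop Z tZ cZ t2Z fZ}

/-- The entropy `h_Ω(f)` of an arbitrary topological dynamical system:
the maximum of `h_CR(f,Ω)` and `inf {h_top(f_Z) : (f_Z,Z,Ω_Z) ∈ 𝒜(Ω,f)}`. -/
noncomputable def hOmega {X : Type u} [TopologicalSpace X] (f : X → X) : EReal :=
  max (hCR f) (sInf (etaleCompEntropies f))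

universe u

/-- Conjecture 1: if `(X,Ω)` is compact Hausdorff, `(f',X',Ω')` is an étale cover of
`(f,X,Ω)` and `(f_Z,Z,Ω_Z)` is a compactification of `(f',X',Ω')`, then
`h_top(f) ≤ h_top(f_Z)`. -/
def Conjecture1 : Prop :=
  ∀ (X : Type u) [TopologicalSpace X] [CompactSpace X] [T2Space X] (f : X → X),
    Continuous f →
    ∀ (X' : Type u) [TopologicalSpace X'] (f' : X' → X') (π : X' → X),
      IsEtaleCover f f' π →
      ∀ (Z : Type u) [TopologicalSpace Z] [CompactSpace Z] [T2Space Z]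
        (fZ : Z → Z) (e : X' → Z), IsCompactification f' fZ e →
        htop f ≤ htop fZ

/-!
A compact invariant set `K ⊆ X` is seen by every member of `𝒜(Ω,f)`: restricting an étale cover
`π : X'' → X` to `π⁻¹ K` gives an étale cover of `f|_K`, and the closure of the image of `π⁻¹ K`
in a compactification `Z` of `X''` is a compactification of it. Conjecture 1 bounds `h_top(f|_K)`
by the entropy of that closed invariant subset of `Z`, hence by `h_top(f_Z)`; so
`h_CR(f) ≤ max 0 (inf 𝒜(Ω,f))`. Since étale covers compose, `𝒜(Ω',f') ⊆ 𝒜(Ω,f)`, so the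
infimum over `𝒜(Ω',f')` is the larger one.
-/

open Function Dynamics

lemma htop_restrict_le {Z : Type*} [TopologicalSpace Z] [CompactSpace Z] [T2Space Z]
    {g : Z → Z} {C : Set Z} [CompactSpace C] (hC : MapsTo g C C) :
    htop (hC.restrict g C C) ≤ htop g := by
  let uZ : UniformSpace Z := uniformSpaceOfCompactR1
  have hunif : uZ.comap ((↑) : C → Z) = uniformSpaceOfCompactR1 :=
    unique_uniformity_of_compact rfl rfl
  calc htop (hC.restrict g C C)
      = @coverEntropy C (uZ.comap (↑)) (hC.restrict g C C) univ := by
        rw [hunif]; rfl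
    _ = coverEntropy g C := coverEntropy_restrict hC
    _ ≤ coverEntropy g univ := coverEntropy_monotone g (subset_univ C)

namespace IsEtaleCover

variable {X X' : Type*} [TopologicalSpace X] [TopologicalSpace X']
  {f : X → X} {f' : X' → X'} {π : X' → X}

lemma comp {X'' : Type*} [TopologicalSpace X''] {f'' : X'' → X''} {π' : X'' → X'}
    (h : IsEtaleCover f f' π) (h' : IsEtaleCover f' f'' π') :
    IsEtaleCover f f'' (π ∘ π') := by
  obtain ⟨-, hπ, hπsurj, hπfib, hπcomm⟩ := h
  obtain ⟨hf'', hπ', hπ'surj, hπ'fib, hπ'comm⟩ := h'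
  refine ⟨hf'', hπ.comp hπ', hπsurj.comp hπ'surj, fun x ↦ ?_, ?_⟩
  · rw [preimage_comp]
    exact (hπfib x).preimage' fun y _ ↦ hπ'fib y
  · rw [comp_assoc, hπ'comm, ← comp_assoc, hπcomm, comp_assoc]

lemma semiconj (h : IsEtaleCover f f' π) : Semiconj π f' f :=
  congrFun h.2.2.2.2

lemma mapsTo_preimage (h : IsEtaleCover f f' π) {K : Set X} (hK : MapsTo f K K) :
    MapsTo f' (π ⁻¹' K) (π ⁻¹' K) :=
  h.semiconj.mapsTo_preimage hK

lemma restrictPreimage (h : IsEtaleCover f f' π) {K : Set X} (hK : MapsTo f K K) :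
    IsEtaleCover (hK.restrict f K K) ((h.mapsTo_preimage hK).restrict f' _ _)
      (K.restrictPreimage π) := by
  obtain ⟨hf', hπ, hπsurj, hπfib, hπcomm⟩ := h
  refine ⟨hf'.restrict _, hπ.restrictPreimage, restrictPreimage_surjective _ hπsurj,
    fun k ↦ ?_, ?_⟩
  · refine ((hπfib k).preimage Subtype.val_injective.injOn).subset fun x hx ↦ ?_
    simpa using congrArg Subtype.val hx
  · funext x
    exact Subtype.ext (congrFun hπcomm x)

end IsEtaleCover

namespace IsCompactification

variable {X' Z : Type*} [TopologicalSpace X'] [TopologicalSpace Z] [CompactSpace Z] [T2Space Z]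
  {f' : X' → X'} {fZ : Z → Z} {e : X' → Z}

lemma semiconj (h : IsCompactification f' fZ e) : Semiconj e f' fZ :=
  fun x ↦ (congrFun h.2.2.2 x).symm

lemma mapsTo_closure_image (h : IsCompactification f' fZ e) {S : Set X'} (hS : MapsTo f' S S) :
    MapsTo fZ (closure (e '' S)) (closure (e '' S)) :=
  (h.semiconj.mapsTo_image hS).closure h.1

lemma restrict (h : IsCompactification f' fZ e) {S : Set X'} [CompactSpace (closure (e '' S))]
    (hS : MapsTo f' S S) :
    IsCompactification (hS.restrict f' S S) ((h.mapsTo_closure_image hS).restrict fZ _ _)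
      ((mapsTo_image e S).mono_right subset_closure).restrict := by
  obtain ⟨hfZ, he, -, hcomm⟩ := h
  refine ⟨hfZ.restrict _, he.restrict _, ?_, ?_⟩
  · rw [DenseRange, Subtype.dense_iff, ← range_comp, MapsTo.restrict_commutes, range_comp,
      Subtype.range_coe]
  · funext x
    exact Subtype.ext (congrFun hcomm x)

end IsCompactification

section Entropy

variable {X : Type u} [TopologicalSpace X] {f : X → X}

lemma htop_restrict_le_of_conjecture1 (hconj : Conjecture1.{u}) (hf : Continuous f)
    {X' Z : Type u} [TopologicalSpace X'] [TopologicalSpace Z] [CompactSpace Z] [T2Space Z]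
    {f' : X' → X'} {π : X' → X} {fZ : Z → Z} {e : X' → Z}
    (hcover : IsEtaleCover f f' π) (hcomp : IsCompactification f' fZ e)
    {K : Set X} [CompactSpace K] [T2Space K] (hK : MapsTo f K K) :
    htop (hK.restrict f K K) ≤ htop fZ := by
  have := isCompact_iff_compactSpace.mp (isClosed_closure (s := e '' (π ⁻¹' K))).isCompact
  exact (hconj K _ (hf.restrict hK) _ _ _ (hcover.restrictPreimage hK) _ _ _
    (hcomp.restrict (hcover.mapsTo_preimage hK))).trans (htop_restrict_le _)

lemma htop_restrict_le_sInf_etaleCompEntropies (hconj : Conjecture1.{u}) (hf : Continuous f)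
    {K : Set X} [CompactSpace K] [T2Space K] (hK : MapsTo f K K) :
    htop (hK.restrict f K K) ≤ sInf (etaleCompEntropies f) := by
  refine le_sInf ?_
  rintro _ ⟨X', _, f', π, hcover, Z, _, _, _, fZ, e, hcomp, rfl⟩
  exact htop_restrict_le_of_conjecture1 hconj hf hcover hcomp hK

lemma hCR_le_max_zero_sInf_etaleCompEntropies (hconj : Conjecture1.{u}) (hf : Continuous f) :
    hCR f ≤ max 0 (sInf (etaleCompEntropies f)) := by
  refine sSup_le ?_
  rintro _ (rfl | ⟨K, hK, _, hfK, rfl⟩)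
  · exact le_max_left _ _
  · have := isCompact_iff_compactSpace.mp hK
    exact le_max_of_le_right (htop_restrict_le_sInf_etaleCompEntropies hconj hf hfK)

lemma hCR_nonneg (f : X → X) : 0 ≤ hCR f :=
  le_sSup (mem_union_left _ rfl)

lemma etaleCompEntropies_subset_of_isEtaleCover {X' : Type u} [TopologicalSpace X']
    {f' : X' → X'} {π : X' → X} (hcover : IsEtaleCover f f' π) :
    etaleCompEntropies f' ⊆ etaleCompEntropies f := by
  rintro _ ⟨X'', _, f'', π', hcover', hcomp⟩
  exact ⟨X'', _, f'', π ∘ π', hcover.comp hcover', hcomp⟩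

end Entropy

/-- Assuming Conjecture 1, if `(f',X',Ω')` is an étale cover of `(f,X,Ω)` then
`h_Ω(f) ≤ h_{Ω'}(f')`. -/
theorem stmt_6 (hconj : Conjecture1.{u}) {X X' : Type u}
    [TopologicalSpace X] [TopologicalSpace X']
    (f : X → X) (f' : X' → X') (π : X' → X) (hf : Continuous f)
    (hcover : IsEtaleCover f f' π) :
    hOmega f ≤ hOmega f' := by
  have hinf : sInf (etaleCompEntropies f) ≤ sInf (etaleCompEntropies f') :=
    sInf_le_sInf (etaleCompEntropies_subset_of_isEtaleCover hcover)
  refine max_le ?_ (le_max_of_le_right hinf)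
  calc hCR f ≤ max 0 (sInf (etaleCompEntropies f)) :=
        hCR_le_max_zero_sInf_etaleCompEntropies hconj hf
    _ ≤ hOmega f' := max_le_max (hCR_nonneg f') hinf
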